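/- arXiv:1809.10505 — 4 statements merged into one kernel-verified Lean document; each statement's English description precedes it below -/
import Mathlib

section
/- For any vector x in R^n and any 1 ≤ K ≤ n, the squared Euclidean norm of the truncation error satisfies ‖x − TopK(x)‖² ≤ ((n−K)/n)·‖x‖². -/
/-!
Every index of `S` carries at least as much mass as every index outside it, so pairing each of
the `K` indices of `S` with each of the `n - K` indices of its complement gives
`K · ∑_{Sᶜ} xⱼ² ≤ (n - K) · ∑_S xᵢ²`. Adding `(n - K) · ∑_{Sᶜ} xⱼ²` to both sides yields
`n · ∑_{Sᶜ} xⱼ² ≤ (n - K) · ‖x‖²`.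
-/

open Finset

variable {ι α : Type*} [Fintype ι] [DecidableEq ι]

theorem card_nsmul_sum_compl_le_of_forall_le [AddCommMonoid α] [PartialOrder α]
    [IsOrderedAddMonoid α] {f : ι → α} {S : Finset ι} (h : ∀ i ∈ S, ∀ j ∈ Sᶜ, f j ≤ f i) :
    #S • ∑ j ∈ Sᶜ, f j ≤ #Sᶜ • ∑ i ∈ S, f i := by
  calc #S • ∑ j ∈ Sᶜ, f j = ∑ _i ∈ S, ∑ j ∈ Sᶜ, f j := by rw [sum_const]
    _ ≤ ∑ i ∈ S, ∑ _j ∈ Sᶜ, f i := sum_le_sum fun i hi => sum_le_sum fun j hj => h i hi j hj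
    _ = #Sᶜ • ∑ i ∈ S, f i := by simp only [sum_const, sum_nsmul]

theorem sum_compl_le_div_card_mul_sum_of_forall_le [Field α] [LinearOrder α]
    [IsStrictOrderedRing α] {f : ι → α} {S : Finset ι} (h : ∀ i ∈ S, ∀ j ∈ Sᶜ, f j ≤ f i) :
    ∑ j ∈ Sᶜ, f j ≤ (#Sᶜ / Fintype.card ι : α) * ∑ i, f i := by
  rcases isEmpty_or_nonempty ι with hι | hι
  · simp [eq_empty_of_isEmpty Sᶜ]
  have hpairs : (#S : α) * ∑ j ∈ Sᶜ, f j ≤ #Sᶜ * ∑ i ∈ S, f i := by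
    simpa only [nsmul_eq_mul] using card_nsmul_sum_compl_le_of_forall_le h
  have hcard : (Fintype.card ι : α) = #S + #Sᶜ := by
    rw [← card_add_card_compl S, Nat.cast_add]
  rw [div_mul_eq_mul_div, le_div_iff₀ (by positivity), ← sum_add_sum_compl S f, hcard]
  linarith

theorem stmt_1_general (n K : ℕ) (x : Fin n → ℝ)
    (S : Finset (Fin n)) (hcard : S.card = K)
    (htop : ∀ i ∈ S, ∀ j ∈ Sᶜ, |x j| ≤ |x i|) :
    ∑ i ∈ Sᶜ, (x i) ^ 2 ≤ (((n : ℝ) - K) / n) * ∑ i, (x i) ^ 2 := by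
  have hcompl : ((#Sᶜ : ℕ) : ℝ) = n - K := by
    rw [card_compl, Fintype.card_fin, Nat.cast_sub (by simpa [hcard] using card_le_univ S), hcard]
  simpa only [hcompl, Fintype.card_fin] using
    sum_compl_le_div_card_mul_sum_of_forall_le (f := fun i => x i ^ 2) fun i hi j hj =>
      sq_le_sq.mpr (htop i hi j hj)

/-- For any vector `x : ℝⁿ` and `1 ≤ K ≤ n`, if `S` is a set of `K` indices carrying the
largest-magnitude components of `x`, then the squared Euclidean norm of the truncation
error satisfies `‖x − TopK(x)‖² ≤ ((n−K)/n)·‖x‖²`. -/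
theorem stmt_1 (n K : ℕ) (hK1 : 1 ≤ K) (hKn : K ≤ n) (x : Fin n → ℝ)
    (S : Finset (Fin n)) (hcard : S.card = K)
    (htop : ∀ i ∈ S, ∀ j ∈ Sᶜ, |x j| ≤ |x i|) :
    ∑ i ∈ Sᶜ, (x i) ^ 2 ≤ (((n : ℝ) - K) / n) * ∑ i, (x i) ^ 2 :=
  stmt_1_general n K x S hcard htop
end

section
/- For any vector x in R^n and any 1 ≤ K ≤ n, ‖x − TopK(x)‖ ≤ γ‖x‖ where γ = sqrt((n−K)/n). -/
/-! Each of the `n − K` dropped squares is at most every one of the `K` kept squares, so the mean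
of the dropped squares is at most the mean of the kept ones; hence the dropped mass is at most the
fraction `(n − K)/n` of the total, and taking square roots gives the bound. -/

open Finset

theorem Finset.card_mul_sum_le_card_mul_sum_of_forall_le {ι : Type*} (S T : Finset ι)
    (f : ι → ℝ) (h : ∀ i ∈ S, ∀ j ∈ T, f j ≤ f i) :
    (#S : ℝ) * ∑ j ∈ T, f j ≤ #T * ∑ i ∈ S, f i :=
  calc (#S : ℝ) * ∑ j ∈ T, f j = ∑ _i ∈ S, ∑ j ∈ T, f j := by rw [sum_const, nsmul_eq_mul]
    _ ≤ ∑ i ∈ S, ∑ _j ∈ T, f i := sum_le_sum fun i hi => sum_le_sum fun j hj => h i hi j hj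
    _ = #T * ∑ i ∈ S, f i := by rw [sum_comm, sum_const, nsmul_eq_mul]

theorem Finset.sum_compl_le_card_compl_div_mul_sum {ι : Type*} [Fintype ι] [DecidableEq ι]
    (S : Finset ι) (f : ι → ℝ) (h : ∀ i ∈ S, ∀ j ∈ Sᶜ, f j ≤ f i) :
    ∑ j ∈ Sᶜ, f j ≤ (#Sᶜ / Fintype.card ι : ℝ) * ∑ i, f i := by
  rcases (Fintype.card ι).eq_zero_or_pos with hι | hι
  · have : Sᶜ = ∅ := eq_empty_of_forall_notMem fun i => (Fintype.card_eq_zero_iff.mp hι).elim i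
    simp [this]
  have hcard : (Fintype.card ι : ℝ) = #S + #Sᶜ := by
    rw [← card_compl_add_card S]; push_cast; ring
  have hmean := card_mul_sum_le_card_mul_sum_of_forall_le S Sᶜ f h
  rw [div_mul_eq_mul_div, le_div_iff₀ (by exact_mod_cast hι), ← sum_add_sum_compl S f, hcard]
  linarith

theorem stmt_2_general (n K : ℕ) (x : Fin n → ℝ)
    (S : Finset (Fin n)) (hcard : S.card = K)
    (htop : ∀ i ∈ S, ∀ j ∈ Sᶜ, |x j| ≤ |x i|) :
    Real.sqrt (∑ i ∈ Sᶜ, (x i) ^ 2) ≤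
      Real.sqrt (((n : ℝ) - K) / n) * Real.sqrt (∑ i, (x i) ^ 2) := by
  have hcompl : (#Sᶜ : ℝ) = n - K := by
    rw [← hcard, eq_sub_iff_add_eq, ← Nat.cast_add, card_compl_add_card, Fintype.card_fin]
  have hsq := sum_compl_le_card_compl_div_mul_sum S (fun i => x i ^ 2)
    fun i hi j hj => sq_le_sq.mpr (htop i hi j hj)
  rw [hcompl, Fintype.card_fin] at hsq
  rw [← Real.sqrt_mul' _ (sum_nonneg fun i _ => sq_nonneg (x i))]
  exact Real.sqrt_le_sqrt hsq

/-- For any vector `x : ℝⁿ` and `1 ≤ K ≤ n`, if `S` is a set of `K` indices carrying the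
largest-magnitude components of `x`, then `‖x − TopK(x)‖ ≤ γ‖x‖` where
`γ = sqrt((n−K)/n)` and `‖·‖` is the Euclidean norm. -/
theorem stmt_2 (n K : ℕ) (hK1 : 1 ≤ K) (hKn : K ≤ n) (x : Fin n → ℝ)
    (S : Finset (Fin n)) (hcard : S.card = K)
    (htop : ∀ i ∈ S, ∀ j ∈ Sᶜ, |x j| ≤ |x i|) :
    Real.sqrt (∑ i ∈ Sᶜ, (x i) ^ 2) ≤
      Real.sqrt (((n : ℝ) - K) / n) * Real.sqrt (∑ i, (x i) ^ 2) :=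
  stmt_2_general n K x S hcard htop
end

section
/- Fix c with 1/2 < c ≤ 1 and θ > 0, and set γ² = 1 − c and α_t = t^{−θ} for t ≥ 1 (with α_0 = 1). Then there exists a constant D > 0 such that for all t ≥ 1, Σ_{k=1}^{t} (2γ²)^k · α_{t−k}² / α_t ≤ D. -/
/-!
Write `r = 2(1 - c) ∈ [0, 1)`. Since `max t 1 ≤ (k + 1) · max (t - k) 1`, the step size satisfies
`α_{t-k} ≤ (k + 1)^θ α_t`, and `α_{t-k}² ≤ α_{t-k}` because `α ≤ 1`. Hence the sum divided by `α_t`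
is at most `∑ₖ (k + 1)^θ rᵏ`, which converges since the geometric factor beats any polynomial.
-/

open Finset

theorem summable_add_one_rpow_mul_geometric (θ : ℝ) {r : ℝ} (hr0 : 0 ≤ r) (hr1 : r < 1) :
    Summable fun k : ℕ => ((k : ℝ) + 1) ^ θ * r ^ k := by
  set n := ⌈θ⌉₊
  have hbound : Summable fun k : ℕ => 2 ^ (n - 1) * ((k : ℝ) ^ n * r ^ k + r ^ k) :=
    ((summable_pow_mul_geometric_of_norm_lt_one n (by rwa [Real.norm_of_nonneg hr0])).add
      (summable_geometric_of_lt_one hr0 hr1)).mul_left _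
  refine hbound.of_nonneg_of_le (fun k => by positivity) fun k => ?_
  have hk : (1 : ℝ) ≤ k + 1 := by simp
  calc ((k : ℝ) + 1) ^ θ * r ^ k ≤ ((k : ℝ) + 1) ^ n * r ^ k := by
        gcongr
        exact_mod_cast Real.rpow_le_rpow_of_exponent_le hk (Nat.le_ceil θ)
    _ ≤ 2 ^ (n - 1) * ((k : ℝ) ^ n + 1 ^ n) * r ^ k := by
        gcongr
        exact add_pow_le (Nat.cast_nonneg k) zero_le_one n
    _ = 2 ^ (n - 1) * ((k : ℝ) ^ n * r ^ k + r ^ k) := by ring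

noncomputable def stepSize (θ : ℝ) (s : ℕ) : ℝ := if s = 0 then 1 else (s : ℝ) ^ (-θ)

section stepSize

variable {θ : ℝ}

theorem stepSize_eq_max_rpow (θ : ℝ) (s : ℕ) : stepSize θ s = ((max s 1 : ℕ) : ℝ) ^ (-θ) := by
  rcases Nat.eq_zero_or_pos s with rfl | hs
  · simp [stepSize]
  · simp [stepSize, hs.ne', Nat.max_eq_left hs]

theorem stepSize_nonneg (θ : ℝ) (s : ℕ) : 0 ≤ stepSize θ s := by
  rw [stepSize_eq_max_rpow]; positivity

theorem stepSize_le_one (hθ : 0 ≤ θ) (s : ℕ) : stepSize θ s ≤ 1 := by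
  rw [stepSize_eq_max_rpow]
  exact Real.rpow_le_one_of_one_le_of_nonpos (by exact_mod_cast le_max_right s 1) (by linarith)

theorem stepSize_tsub_le (hθ : 0 ≤ θ) (t k : ℕ) :
    stepSize θ (t - k) ≤ ((k : ℝ) + 1) ^ θ * stepSize θ t := by
  set m := max (t - k) 1
  have hm : (1 : ℝ) ≤ m := by exact_mod_cast le_max_right (t - k) 1
  have hk : (0 : ℝ) < k + 1 := by positivity
  have hmax : max t 1 ≤ (k + 1) * m := by
    have : k ≤ k * m := Nat.le_mul_of_pos_right k (by omega)
    calc max t 1 ≤ m + k := by omega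
      _ ≤ (k + 1) * m := by rw [add_mul, one_mul, add_comm]; omega
  calc stepSize θ (t - k) = ((k : ℝ) + 1) ^ θ * (((k : ℝ) + 1) * m) ^ (-θ) := by
        rw [stepSize_eq_max_rpow, Real.mul_rpow hk.le (by linarith), ← mul_assoc,
          ← Real.rpow_add hk, add_neg_cancel, Real.rpow_zero, one_mul]
    _ ≤ ((k : ℝ) + 1) ^ θ * stepSize θ t := by
        rw [stepSize_eq_max_rpow]
        refine mul_le_mul_of_nonneg_left ?_ (by positivity)
        exact Real.rpow_le_rpow_of_nonpos (by positivity) (by exact_mod_cast hmax) (by linarith)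

end stepSize

theorem sum_geometric_mul_stepSize_sq_le {r θ : ℝ} (hr : 0 ≤ r) (hθ : 0 ≤ θ) (s : Finset ℕ)
    (t : ℕ) : ∑ k ∈ s, r ^ k * stepSize θ (t - k) ^ 2 ≤
      (∑ k ∈ s, ((k : ℝ) + 1) ^ θ * r ^ k) * stepSize θ t := by
  rw [sum_mul]
  refine sum_le_sum fun k _ => ?_
  have h0 := stepSize_nonneg θ (t - k)
  calc r ^ k * stepSize θ (t - k) ^ 2 ≤ r ^ k * stepSize θ (t - k) := by
        gcongr
        nlinarith [stepSize_le_one hθ (t - k)]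
    _ ≤ r ^ k * (((k : ℝ) + 1) ^ θ * stepSize θ t) := by
        gcongr
        exact stepSize_tsub_le hθ t k
    _ = ((k : ℝ) + 1) ^ θ * r ^ k * stepSize θ t := by ring

/-- Fix `1/2 < c ≤ 1` and `θ > 0`, set `γ² = 1 − c` and `α_t = t^{−θ}` for `t ≥ 1`
(with `α_0 = 1`). Then there is `D > 0` such that for all `t ≥ 1`,
`Σ_{k=1}^{t} (2γ²)^k · α_{t−k}² / α_t ≤ D`. -/
theorem stmt_9 (c θ : ℝ) (hc1 : 1 / 2 < c) (hc2 : c ≤ 1) (hθ : 0 < θ) :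
    ∃ D : ℝ, 0 < D ∧ ∀ t : ℕ, 1 ≤ t →
      (∑ k ∈ Finset.Icc 1 t, (2 * (1 - c)) ^ k *
          ((fun s : ℕ => if s = 0 then (1 : ℝ) else (s : ℝ) ^ (-θ)) (t - k)) ^ 2) /
        ((t : ℝ) ^ (-θ)) ≤ D := by
  set r := 2 * (1 - c)
  have hr0 : 0 ≤ r := by linarith
  have hS := summable_add_one_rpow_mul_geometric θ hr0 (by linarith)
  have hS_nonneg : ∀ k : ℕ, 0 ≤ ((k : ℝ) + 1) ^ θ * r ^ k := fun k => by positivity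
  refine ⟨∑' k : ℕ, ((k : ℝ) + 1) ^ θ * r ^ k, hS.tsum_pos hS_nonneg 0 (by simp), fun t ht => ?_⟩
  have hαt : stepSize θ t = (t : ℝ) ^ (-θ) := if_neg (by omega)
  change (∑ k ∈ Icc 1 t, r ^ k * stepSize θ (t - k) ^ 2) / _ ≤ _
  rw [← hαt, div_le_iff₀ (by rw [hαt]; positivity)]
  calc ∑ k ∈ Icc 1 t, r ^ k * stepSize θ (t - k) ^ 2
      ≤ (∑ k ∈ Icc 1 t, ((k : ℝ) + 1) ^ θ * r ^ k) * stepSize θ t :=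
        sum_geometric_mul_stepSize_sq_le hr0 hθ.le _ t
    _ ≤ _ := by
        gcongr
        · exact stepSize_nonneg θ t
        · exact hS.sum_le_tsum _ fun k _ => hS_nonneg k
end

section
/- Suppose a nonnegative sequence e_t satisfies e_t² ≤ c²·Σ_{k=1}^{t} q^k · β_{t−k+1} where 0 < q < 1, c > 0, and β_s ≤ M²·α_{s−1}² for a positive nonincreasing sequence (α_s) satisfying Σ_{k=1}^t q^k α_{t−k}²/α_t ≤ D for all t. Then e_t² ≤ c²·M²·D·α_t for all t ≥ 1. -/
open Finset

lemma sum_Icc_pow_mul_shift_le {q M : ℝ} (hq : 0 ≤ q) {α β : ℕ → ℝ}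
    (hβ : ∀ s, 1 ≤ s → β s ≤ M ^ 2 * α (s - 1) ^ 2) (t : ℕ) :
    ∑ k ∈ Icc 1 t, q ^ k * β (t - k + 1) ≤ M ^ 2 * ∑ k ∈ Icc 1 t, q ^ k * α (t - k) ^ 2 := by
  rw [mul_sum]
  refine sum_le_sum fun k _ => ?_
  calc q ^ k * β (t - k + 1) ≤ q ^ k * (M ^ 2 * α (t - k) ^ 2) :=
        mul_le_mul_of_nonneg_left (hβ _ le_add_self) (pow_nonneg hq k)
    _ = M ^ 2 * (q ^ k * α (t - k) ^ 2) := by ring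

theorem stmt_17_general (q c M D : ℝ) (hq0 : 0 < q)
    (e β α : ℕ → ℝ)
    (hα_pos : ∀ s, 0 < α s)
    (hβ : ∀ s, 1 ≤ s → β s ≤ M ^ 2 * (α (s - 1)) ^ 2)
    (hrec : ∀ t, 1 ≤ t → (e t) ^ 2 ≤ c ^ 2 * ∑ k ∈ Finset.Icc 1 t, q ^ k * β (t - k + 1))
    (hD : ∀ t, 1 ≤ t → ∑ k ∈ Finset.Icc 1 t, q ^ k * (α (t - k)) ^ 2 / α t ≤ D) :
    ∀ t, 1 ≤ t → (e t) ^ 2 ≤ c ^ 2 * M ^ 2 * D * α t := by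
  intro t ht
  have hαD : ∑ k ∈ Icc 1 t, q ^ k * α (t - k) ^ 2 ≤ D * α t := by
    rw [← div_le_iff₀ (hα_pos t), sum_div]
    exact hD t ht
  calc e t ^ 2 ≤ c ^ 2 * ∑ k ∈ Icc 1 t, q ^ k * β (t - k + 1) := hrec t ht
    _ ≤ c ^ 2 * (M ^ 2 * (D * α t)) := by
      gcongr
      exact (sum_Icc_pow_mul_shift_le hq0.le hβ t).trans (by gcongr)
    _ = c ^ 2 * M ^ 2 * D * α t := by ring

/-- If a nonnegative sequence `e_t` satisfies
`e_t² ≤ c²·Σ_{k=1}^{t} q^k · β_{t−k+1}` with `0 < q < 1`, `c > 0`, where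
`β_s ≤ M²·α_{s−1}²` for a positive nonincreasing sequence `α` satisfying
`Σ_{k=1}^t q^k α_{t−k}²/α_t ≤ D` for all `t ≥ 1`, then `e_t² ≤ c²·M²·D·α_t`. -/
theorem stmt_17 (q c M D : ℝ) (hq0 : 0 < q) (hq1 : q < 1) (hc : 0 < c) (hM : 0 < M)
    (e β α : ℕ → ℝ) (he : ∀ t, 0 ≤ e t)
    (hα_pos : ∀ s, 0 < α s) (hα_anti : Antitone α)
    (hβ : ∀ s, 1 ≤ s → β s ≤ M ^ 2 * (α (s - 1)) ^ 2)
    (hrec : ∀ t, 1 ≤ t → (e t) ^ 2 ≤ c ^ 2 * ∑ k ∈ Finset.Icc 1 t, q ^ k * β (t - k + 1))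
    (hD : ∀ t, 1 ≤ t → ∑ k ∈ Finset.Icc 1 t, q ^ k * (α (t - k)) ^ 2 / α t ≤ D) :
    ∀ t, 1 ≤ t → (e t) ^ 2 ≤ c ^ 2 * M ^ 2 * D * α t :=
  stmt_17_general q c M D hq0 e β α hα_pos hβ hrec hD
end
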